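/- arXiv:1702.07265 — 5 statements merged into one kernel-verified Lean document; each statement's English description precedes it below -/
import Mathlib

section
/- For all natural numbers K ≥ 1 and m with 0 ≤ m ≤ K, and every real number p with 0 < p ≤ 1, ∑_{t=0}^{K-1} [C(K, t+1) − C(K−m, t+1)] · p^t · (1-p)^{K-t} = ((1-p)/p) · (1 − (1-p)^m), where C(a,b) denotes the binomial coefficient with the convention C(a,b) = 0 when b > a. (This identity shows that removing the C(K−m,t+1) redundant packets at each level t of the decentralized scheme yields the optimal decentralized load ((1-p)/p)(1−(1-p)^m) with m = min(K,N).) -/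
lemma dMAN_aux (n : ℕ) (p : ℝ) (hp : 0 < p) :
    ∑ t ∈ Finset.range n, (n.choose (t + 1) : ℝ) * p ^ t * (1 - p) ^ (n - t)
      = ((1 - p) / p) * (1 - (1 - p) ^ n) := by
  have hb : (∑ k ∈ Finset.range (n + 1),
      p ^ k * (1 - p) ^ (n - k) * (n.choose k : ℝ)) = 1 := by
    rw [← add_pow]
    have : p + (1 - p) = 1 := by ring
    rw [this, one_pow]
  rw [Finset.sum_range_succ'] at hb
  simp only [pow_zero, Nat.sub_zero, Nat.choose_zero_right, Nat.cast_one, one_mul, mul_one] at hb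
  have hsum : (∑ i ∈ Finset.range n,
      p ^ (i + 1) * (1 - p) ^ (n - (i + 1)) * (n.choose (i + 1) : ℝ)) = 1 - (1 - p) ^ n := by
    linarith
  calc ∑ t ∈ Finset.range n, (n.choose (t + 1) : ℝ) * p ^ t * (1 - p) ^ (n - t)
      = ∑ t ∈ Finset.range n,
          ((1 - p) / p) * (p ^ (t + 1) * (1 - p) ^ (n - (t + 1)) * (n.choose (t + 1) : ℝ)) := by
        refine Finset.sum_congr rfl fun t ht => ?_
        have htn : t < n := Finset.mem_range.mp ht
        have h1 : n - t = n - (t + 1) + 1 := by omega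
        rw [h1, pow_succ, pow_succ]
        field_simp
    _ = ((1 - p) / p) * (1 - (1 - p) ^ n) := by rw [← Finset.mul_sum, hsum]

/-- Optimal decentralized load under uncoded placement: for `K ≥ 1`, `m ≤ K`
and `0 < p ≤ 1`,
`∑_{t=0}^{K-1} (C(K,t+1) − C(K−m,t+1)) p^t (1-p)^{K-t} = ((1-p)/p)(1 − (1-p)^m)`,
with the convention `C(a,b) = 0` for `b > a`. -/
theorem dMAN_optimal_load (K m : ℕ) (hK : 1 ≤ K) (hm : m ≤ K)
    (p : ℝ) (hp : 0 < p) (hp1 : p ≤ 1) :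
    ∑ t ∈ Finset.range K,
        ((K.choose (t + 1) : ℝ) - ((K - m).choose (t + 1) : ℝ)) * p ^ t * (1 - p) ^ (K - t)
      = ((1 - p) / p) * (1 - (1 - p) ^ m) := by
  have hsplit : ∑ t ∈ Finset.range K,
        ((K.choose (t + 1) : ℝ) - ((K - m).choose (t + 1) : ℝ)) * p ^ t * (1 - p) ^ (K - t)
      = (∑ t ∈ Finset.range K, (K.choose (t + 1) : ℝ) * p ^ t * (1 - p) ^ (K - t))
        - ∑ t ∈ Finset.range K, ((K - m).choose (t + 1) : ℝ) * p ^ t * (1 - p) ^ (K - t) := by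
    rw [← Finset.sum_sub_distrib]
    exact Finset.sum_congr rfl fun t _ => by ring
  have h2 : ∑ t ∈ Finset.range K, ((K - m).choose (t + 1) : ℝ) * p ^ t * (1 - p) ^ (K - t)
      = (1 - p) ^ m * (((1 - p) / p) * (1 - (1 - p) ^ (K - m))) := by
    have hsub : Finset.range (K - m) ⊆ Finset.range K :=
      Finset.range_subset_range.mpr (Nat.sub_le K m)
    rw [← Finset.sum_subset hsub (fun t _ ht => by
      have : K - m < t + 1 := by
        have := Finset.mem_range.not.mp ht; omega
      rw [Nat.choose_eq_zero_of_lt this]; simp)]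
    rw [← dMAN_aux (K - m) p hp, Finset.mul_sum]
    refine Finset.sum_congr rfl fun t ht => ?_
    have htn : t < K - m := Finset.mem_range.mp ht
    have h1 : K - t = (K - m - t) + m := by omega
    rw [h1, pow_add]
    ring
  rw [hsplit, dMAN_aux K p hp, h2]
  have hKm : (1 - p) ^ m * (1 - p) ^ (K - m) = (1 - p) ^ K := by
    rw [← pow_add]; congr 1; omega
  have : (1 - p) ^ m * (1 - (1 - p) ^ (K - m)) = (1 - p) ^ m - (1 - p) ^ K := by
    rw [mul_sub, hKm, mul_one]
  rw [show (1 - p) ^ m * ((1 - p) / p * (1 - (1 - p) ^ (K - m)))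
      = (1 - p) / p * ((1 - p) ^ m * (1 - (1 - p) ^ (K - m))) from by ring, this]
  ring
end

section
/- Correctness of the centralized Maddah-Ali–Niesen (cMAN) delivery scheme: let K ≥ 1, N ≥ 1 and t ∈ {0,…,K−1} be naturals, let G be an additive abelian group, let F : Fin N → {W : Finset (Fin K) // W.card = t} → G assign a subfile value to each file index and each t-subset, and let d : Fin K → Fin N be any demand. Define for each (t+1)-subset S of Fin K the packet X_S = ∑_{s∈S} F(d s)(S∖{s}). Then for every user k ∈ Fin K there exists a function dec_k of the packets (X_S : |S| = t+1) and of user k's cache contents (F(i)(W) : i ∈ Fin N, W with k ∈ W) whose output equals the full demanded file (F(d k)(W) : W with k ∉ W, |W| = t); explicitly, for every t-subset W with k ∉ W, F(d k)(W) = X_{W∪{k}} − ∑_{s∈W} F(d s)((W∪{k})∖{s}), and each subtracted term F(d s)((W∪{k})∖{s}) with s ∈ W is cached by user k because k ∈ (W∪{k})∖{s}. -/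
/-- The cMAN delivery packet `X_S = ∑_{s ∈ S} F_{d_s, S∖{s}}` associated with a
`(t+1)`-subset `S` of the `K` users, for subfile assignment `F` and demand `d`. -/
noncomputable def cmanPacket {K N t : ℕ} {G : Type*} [AddCommGroup G]
    (d : Fin K → Fin N) (F : Fin N → {W : Finset (Fin K) // W.card = t} → G)
    (S : {S : Finset (Fin K) // S.card = t + 1}) : G :=
  ∑ s ∈ S.1.attach,
    F (d s.1) ⟨S.1.erase s.1, by simp [Finset.card_erase_of_mem s.2, S.2]⟩

lemma cMAN_key {K N t : ℕ} {G : Type*} [AddCommGroup G]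
    (F' : Fin N → {W : Finset (Fin K) // W.card = t} → G)
    (d : Fin K → Fin N) (k : Fin K)
    (W : Finset (Fin K)) (hW : W.card = t) (hk : k ∉ W) :
    F' (d k) ⟨W, hW⟩
      = cmanPacket d F'
          ⟨insert k W, by simp [Finset.card_insert_of_notMem hk, hW]⟩
        - ∑ s ∈ W.attach,
            F' (d s.1) ⟨(insert k W).erase s.1, by
              simp [Finset.card_erase_of_mem (Finset.mem_insert_of_mem s.2),
                Finset.card_insert_of_notMem hk, hW]⟩ := by
  classical
  have hScard : (insert k W).card = t + 1 := by
    simp [Finset.card_insert_of_notMem hk, hW]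
  set S : Finset (Fin K) := insert k W with hS
  let g : Fin K → G := fun s =>
    if h : s ∈ S then
      F' (d s) ⟨S.erase s, by simp [Finset.card_erase_of_mem h, hScard]⟩
    else 0
  have h1 : cmanPacket d F' ⟨S, hScard⟩ = ∑ s ∈ S, g s := by
    rw [← Finset.sum_attach S g]
    refine Finset.sum_congr rfl ?_
    intro s _
    simp only [g, dif_pos s.2]
  have h2 : ∑ s ∈ S, g s = g k + ∑ s ∈ W, g s := by
    rw [hS, Finset.sum_insert hk]
  have h3 : g k = F' (d k) ⟨W, hW⟩ := by
    have hkS : k ∈ S := Finset.mem_insert_self k W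
    simp only [g, dif_pos hkS]
    congr 1
    exact Subtype.ext (by simp [hS, Finset.erase_insert hk])
  have h4 : ∑ s ∈ W, g s
      = ∑ s ∈ W.attach,
          F' (d s.1) ⟨(insert k W).erase s.1, by
            simp [Finset.card_erase_of_mem (Finset.mem_insert_of_mem s.2),
              Finset.card_insert_of_notMem hk, hW]⟩ := by
    rw [← Finset.sum_attach W g]
    refine Finset.sum_congr rfl ?_
    intro s _
    simp only [g]
    exact dif_pos (Finset.mem_insert_of_mem s.2 : s.1 ∈ S)
  rw [h1, h2, h3, h4]
  abel

/-- Correctness of the centralized Maddah-Ali–Niesen delivery scheme: every user `k`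
can recover all the subfiles `F_{d_k, W}` with `k ∉ W` from the packets
`(X_S : |S| = t+1)` and its cache contents `(F_{i,W} : k ∈ W)`; explicitly,
`F_{d_k, W} = X_{W ∪ {k}} − ∑_{s ∈ W} F_{d_s, (W∪{k})∖{s}}`. -/
theorem cMAN_correct (K N t : ℕ) (hK : 1 ≤ K) (hN : 1 ≤ N) (ht : t + 1 ≤ K)
    (G : Type*) [AddCommGroup G]
    (F : Fin N → {W : Finset (Fin K) // W.card = t} → G)
    (d : Fin K → Fin N) :
    ∀ k : Fin K,
      (∃ dec : ({S : Finset (Fin K) // S.card = t + 1} → G) →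
          ((i : Fin N) → {W : Finset (Fin K) // W.card = t ∧ k ∈ W} → G) →
          ({W : Finset (Fin K) // W.card = t ∧ k ∉ W} → G),
        ∀ F' : Fin N → {W : Finset (Fin K) // W.card = t} → G,
          dec (cmanPacket d F') (fun i W => F' i ⟨W.1, W.2.1⟩)
            = fun W => F' (d k) ⟨W.1, W.2.1⟩) ∧
      (∀ W : Finset (Fin K), ∀ hW : W.card = t, ∀ hk : k ∉ W,
        F (d k) ⟨W, hW⟩
          = cmanPacket d F
              ⟨insert k W, by simp [Finset.card_insert_of_notMem hk, hW]⟩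
            - ∑ s ∈ W.attach,
                F (d s.1) ⟨(insert k W).erase s.1, by
                  simp [Finset.card_erase_of_mem (Finset.mem_insert_of_mem s.2),
                    Finset.card_insert_of_notMem hk, hW]⟩) := by
  intro k
  constructor
  · refine ⟨fun X C W =>
      match W with
      | ⟨Ws, hWc, hk'⟩ =>
        X ⟨insert k Ws, by simp [Finset.card_insert_of_notMem hk', hWc]⟩
          - ∑ s ∈ Ws.attach,
              C (d s.1) ⟨(insert k Ws).erase s.1,
                ⟨by simp [Finset.card_erase_of_mem (Finset.mem_insert_of_mem s.2),
                    Finset.card_insert_of_notMem hk', hWc],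
                 Finset.mem_erase.2 ⟨(ne_of_mem_of_not_mem s.2 hk').symm,
                   Finset.mem_insert_self k Ws⟩⟩⟩, ?_⟩
    intro F'
    funext W
    obtain ⟨Ws, hWc, hk'⟩ := W
    exact (cMAN_key F' d k Ws hWc hk').symm
  · intro W hW hk
    exact cMAN_key F d k W hW hk
end

section
/- Single-shot acyclic outer bound for index coding: let N be a natural number, let M₁,…,M_N be finite nonempty message sets, let 𝒳 be a finite set, let A_j ⊆ [1:N]∖{j} be side information sets, and suppose there are an encoder enc : ∏_{i=1}^N M_i → 𝒳 and decoders g_j with g_j(enc(m), (m_i)_{i∈A_j}) = m_j for all message tuples m and all j ∈ [1:N]. Let J ⊆ [1:N] admit an enumeration j₁,…,j_r such that A_{j_ℓ} ∩ J ⊆ {j₁,…,j_{ℓ−1}} for every ℓ (i.e., J induces an acyclic subgraph of the side information graph). Then for any fixed values of the messages outside J, the map (m_j)_{j∈J} ↦ enc(m) is injective, and hence ∏_{j∈J} |M_j| ≤ |𝒳|. -/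
/-- Single-shot acyclic outer bound for index coding: if a zero-error single-shot
index code exists (encoder `enc` into the finite alphabet `𝒳` and, for every
receiver `j`, a decoder recovering `m j` from `enc m` and the side information
`(m i : i ∈ A j)`), and `J` admits an enumeration `j₁,…,j_r` with
`A (j_ℓ) ∩ J ⊆ {j₁,…,j_{ℓ-1}}` for every `ℓ` (i.e. `J` induces an acyclic subgraph
of the side information graph), then for every fixed assignment of the messages
outside `J` the map `(m_j)_{j ∈ J} ↦ enc m` is injective, and hence
`∏_{j ∈ J} |M j| ≤ |𝒳|`. -/
theorem index_coding_acyclic_outer_bound (N : ℕ) (M : Fin N → Type*)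
    [∀ i, Fintype (M i)] [∀ i, Nonempty (M i)]
    (𝒳 : Type*) [Fintype 𝒳]
    (A : Fin N → Finset (Fin N)) (hA : ∀ j, j ∉ A j)
    (enc : (∀ i, M i) → 𝒳)
    (g : ∀ j : Fin N, 𝒳 → (∀ i : A j, M i) → M j)
    (hg : ∀ (m : ∀ i, M i) (j : Fin N), g j (enc m) (fun i => m i) = m j)
    (J : Finset (Fin N)) (σ : List (Fin N)) (hnd : σ.Nodup) (hσ : σ.toFinset = J)
    (hacyc : ∀ ℓ (h : ℓ < σ.length), (A (σ.get ⟨ℓ, h⟩) ∩ J) ⊆ (σ.take ℓ).toFinset) :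
    (∀ m₀ : ∀ i, M i,
        Function.Injective (fun mJ : (∀ j : J, M j) =>
          enc (fun i => if h : i ∈ J then mJ ⟨i, h⟩ else m₀ i))) ∧
      ∏ j ∈ J, Fintype.card (M j) ≤ Fintype.card 𝒳 := by
  have hinj : ∀ m₀ : ∀ i, M i,
      Function.Injective (fun mJ : (∀ j : J, M j) =>
        enc (fun i => if h : i ∈ J then mJ ⟨i, h⟩ else m₀ i)) := by
    intro m₀ mJ mJ' henc
    simp only at henc
    set m : ∀ i, M i := fun i => if h : i ∈ J then mJ ⟨i, h⟩ else m₀ i with hm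
    set m' : ∀ i, M i := fun i => if h : i ∈ J then mJ' ⟨i, h⟩ else m₀ i with hm'
    have key : ∀ ℓ (h : ℓ < σ.length), m σ[ℓ] = m' σ[ℓ] := by
      intro ℓ
      induction ℓ using Nat.strong_induction_on with
      | _ ℓ IH =>
        intro h
        set j := σ[ℓ] with hj
        have h1 := hg m j
        have h2 := hg m' j
        rw [← h1, ← h2]
        have hside : (fun i : A j => m i) = (fun i : A j => m' i) := by
          funext i
          by_cases hiJ : (i : Fin N) ∈ J
          · have hi : (i : Fin N) ∈ (σ.take ℓ).toFinset :=
              hacyc ℓ h (Finset.mem_inter.mpr ⟨i.2, hiJ⟩)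
            rw [List.mem_toFinset] at hi
            obtain ⟨k, hk, hkeq⟩ := List.mem_iff_getElem.mp hi
            have hkℓ : k < ℓ := lt_of_lt_of_le hk (by simp [List.length_take])
            have hkσ : k < σ.length := lt_trans hkℓ h
            have : (σ.take ℓ)[k] = σ[k] := List.getElem_take
            rw [this] at hkeq
            have := IH k hkℓ hkσ
            rw [← hkeq]
            exact this
          · simp only [hm, hm', dif_neg hiJ]
        rw [hside, henc]
    funext ⟨i, hi⟩
    have hi' : i ∈ σ := by rw [← hσ] at hi; exact List.mem_toFinset.mp hi
    obtain ⟨ℓ, hℓ, hℓeq⟩ := List.mem_iff_getElem.mp hi'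
    have := key ℓ hℓ
    rw [hℓeq] at this
    simpa only [hm, hm', dif_pos hi] using this
  refine ⟨hinj, ?_⟩
  obtain ⟨m₀⟩ := (inferInstance : Nonempty (∀ i, M i))
  have hcard := Fintype.card_le_of_injective _ (hinj m₀)
  rwa [Fintype.card_pi, Finset.prod_coe_sort J (fun j => Fintype.card (M j))] at hcard
end

section
/- Mutual information computation in Example 2: let U₁,…,U₆ be mutually independent random variables on a probability space, each uniformly distributed on 𝔽₂, and let X = (U₁+U₃+U₄, U₂+U₄+U₅, U₁+U₂+U₆). Then for every j ∈ {1,…,6}, the conditional mutual information I[U_j : X | (U_i)_{i∈A_j}] equals log 2 (natural logarithm), where A₁ = {3,4}, A₂ = {4,5}, A₃ = {5,6}, A₄ = {2,3,6}, A₅ = {1,4,6}, A₆ = {1,2}. For instance, I[U₅ : X | (U₁,U₄,U₆)] = H[U₅] = log 2. -/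
open MeasureTheory ProbabilityTheory

/-- Shannon entropy (natural logarithm) of a finite-valued random variable. -/
noncomputable def Hent {Ω : Type*} [MeasurableSpace Ω] (μ : Measure Ω)
    {S : Type*} [Fintype S] (X : Ω → S) : ℝ :=
  ∑ s : S, Real.negMulLog (μ (X ⁻¹' {s})).toReal

/-- Conditional Shannon entropy `H[X|Y] = H[(X,Y)] − H[Y]`. -/
noncomputable def HcondEnt {Ω : Type*} [MeasurableSpace Ω] (μ : Measure Ω)
    {S T : Type*} [Fintype S] [Fintype T] (X : Ω → S) (Y : Ω → T) : ℝ :=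
  Hent μ (fun ω => (X ω, Y ω)) - Hent μ Y

/-- Conditional mutual information `I[X:Y|Z] = H[X|Z] + H[Y|Z] − H[(X,Y)|Z]`. -/
noncomputable def ImutCond {Ω : Type*} [MeasurableSpace Ω] (μ : Measure Ω)
    {S T V : Type*} [Fintype S] [Fintype T] [Fintype V]
    (X : Ω → S) (Y : Ω → T) (Z : Ω → V) : ℝ :=
  HcondEnt μ X Z + HcondEnt μ Y Z - HcondEnt μ (fun ω => (X ω, Y ω)) Z

instance : MeasurableSpace (ZMod 2) := ⊤

/-- Side information sets of the six-message index coding problem of Example 1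
(0-based indexing): `A₁ = {3,4}`, `A₂ = {4,5}`, `A₃ = {5,6}`, `A₄ = {2,3,6}`,
`A₅ = {1,4,6}`, `A₆ = {1,2}`. -/
def exSideInfo : Fin 6 → Finset (Fin 6) :=
  ![{2, 3}, {3, 4}, {4, 5}, {1, 2, 5}, {0, 3, 5}, {0, 1}]

section Aux

variable {Ω : Type*} [MeasurableSpace Ω] (μ : Measure Ω) [IsProbabilityMeasure μ]
  (U : Fin 6 → Ω → ZMod 2)

omit [IsProbabilityMeasure μ] in
lemma atom_meas (hIndep : iIndepFun U μ)
    (hUnif : ∀ (j : Fin 6) (s : ZMod 2), μ (U j ⁻¹' {s}) = (2 : ENNReal)⁻¹)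
    (u : Fin 6 → ZMod 2) :
    μ (⋂ i, U i ⁻¹' {u i}) = 64⁻¹ := by
  have h := hIndep.measure_inter_preimage_eq_mul Finset.univ
    (sets := fun i => {u i}) (fun i _ => MeasurableSpace.measurableSet_top)
  have e : (⋂ i, U i ⁻¹' {u i}) = ⋂ i ∈ Finset.univ, U i ⁻¹' {u i} := by simp
  rw [e, h]
  simp only [hUnif, Finset.prod_const, Finset.card_univ, Fintype.card_fin]
  rw [← ENNReal.inv_pow]
  norm_num

lemma union_meas (hIndep : iIndepFun U μ)
    (hUnif : ∀ (j : Fin 6) (s : ZMod 2), μ (U j ⁻¹' {s}) = (2 : ENNReal)⁻¹)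
    (F : Finset (Fin 6 → ZMod 2)) :
    μ (⋃ u ∈ F, ⋂ i, U i ⁻¹' {u i}) = F.card * 64⁻¹ := by
  classical
  set A : (Fin 6 → ZMod 2) → Set Ω := fun u => ⋂ i, U i ⁻¹' {u i} with hA
  have hAm : ∀ u, μ (A u) = 64⁻¹ := atom_meas μ U hIndep hUnif
  have hle : ∀ G : Finset (Fin 6 → ZMod 2), μ (⋃ u ∈ G, A u) ≤ G.card * 64⁻¹ := by
    intro G
    refine le_trans (measure_biUnion_finset_le G A) ?_
    simp [hAm, Finset.sum_const, nsmul_eq_mul]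
  refine le_antisymm (hle F) ?_
  set Fc : Finset (Fin 6 → ZMod 2) := Finset.univ \ F with hFc
  have hcardn : F.card + Fc.card = 64 := by
    have h1 : Fc.card = 64 - F.card := by
      rw [hFc, Finset.card_sdiff_of_subset (Finset.subset_univ F), Finset.card_univ]
      norm_num [Fintype.card_fun]
    have h2 : F.card ≤ 64 := by
      have := Finset.card_le_card (Finset.subset_univ F)
      simpa [Finset.card_univ, Fintype.card_fun] using this
    omega
  have hcov : (⋃ u ∈ F, A u) ∪ (⋃ u ∈ Fc, A u) = Set.univ := by
    ext ω
    simp only [Set.mem_union, Set.mem_iUnion, Set.mem_univ, iff_true]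
    by_cases h : (fun i => U i ω) ∈ F
    · exact Or.inl ⟨fun i => U i ω, h, by simp [hA]⟩
    · exact Or.inr ⟨fun i => U i ω, by simp [hFc, h], by simp [hA]⟩
  have h1 : (1 : ENNReal) ≤ μ (⋃ u ∈ F, A u) + μ (⋃ u ∈ Fc, A u) := by
    rw [show (1 : ENNReal) = μ Set.univ from (measure_univ (μ := μ)).symm, ← hcov]
    exact measure_union_le _ _
  have h2 : (1 : ENNReal) ≤ μ (⋃ u ∈ F, A u) + Fc.card * 64⁻¹ :=
    h1.trans (add_le_add le_rfl (hle Fc))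
  have h3 : (F.card : ENNReal) * 64⁻¹ + Fc.card * 64⁻¹ = 1 := by
    rw [← add_mul]
    have : ((F.card : ENNReal) + Fc.card) = 64 := by exact_mod_cast hcardn
    rw [this]
    rw [ENNReal.mul_inv_cancel (by norm_num) (by norm_num)]
  have hfin : ((Fc.card : ENNReal) * 64⁻¹) ≠ ⊤ :=
    ENNReal.mul_ne_top (by simp) (by simp)
  have h4 : (F.card : ENNReal) * 64⁻¹ + Fc.card * 64⁻¹
      ≤ μ (⋃ u ∈ F, A u) + Fc.card * 64⁻¹ := by
    rw [h3]; exact h2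
  exact (ENNReal.add_le_add_iff_right hfin).mp h4

lemma comp_meas (hIndep : iIndepFun U μ)
    (hUnif : ∀ (j : Fin 6) (s : ZMod 2), μ (U j ⁻¹' {s}) = (2 : ENNReal)⁻¹)
    {S : Type*} [DecidableEq S] (g : (Fin 6 → ZMod 2) → S) (s : S) :
    μ ((fun ω => g (fun i => U i ω)) ⁻¹' {s}) =
      ((Finset.univ.filter (fun u : Fin 6 → ZMod 2 => g u = s)).card : ENNReal) * 64⁻¹ := by
  classical
  have e : (fun ω => g (fun i => U i ω)) ⁻¹' {s}
      = ⋃ u ∈ Finset.univ.filter (fun u : Fin 6 → ZMod 2 => g u = s),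
          ⋂ i, U i ⁻¹' {u i} := by
    ext ω
    simp only [Set.mem_preimage, Set.mem_singleton_iff, Set.mem_iUnion, Finset.mem_filter,
      Finset.mem_univ, true_and, Set.mem_iInter]
    constructor
    · intro h
      exact ⟨fun i => U i ω, h, fun i => rfl⟩
    · rintro ⟨u, hu, hω⟩
      have huω : (fun i => U i ω) = u := funext hω
      rw [huω]; exact hu
  rw [e, union_meas μ U hIndep hUnif]

lemma sum_negMulLog_fib {S : Type*} [Fintype S] (c : S → ℕ) (m : ℕ) (hm : m ≠ 0)
    (hfib : ∀ s, c s = 0 ∨ c s = m) (hsum : ∑ s : S, c s = 64) :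
    ∑ s : S, Real.negMulLog ((c s : ℝ) / 64) = Real.log (64 / m) := by
  classical
  have key : ∀ s, Real.negMulLog ((c s : ℝ) / 64)
      = if c s = 0 then 0 else Real.negMulLog ((m : ℝ) / 64) := by
    intro s
    rcases hfib s with h | h
    · simp [h]
    · rw [h, if_neg hm]
  rw [Finset.sum_congr rfl (fun s _ => key s), Finset.sum_ite, Finset.sum_const_zero, zero_add,
    Finset.sum_const, nsmul_eq_mul]
  have hKm : (Finset.univ.filter (fun s => ¬ c s = 0)).card * m = 64 := by
    have h1 : ∑ s ∈ Finset.univ.filter (fun s => ¬ c s = 0), c s = 64 := by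
      rw [Finset.sum_filter_of_ne (fun x _ hx => hx), hsum]
    have h2 : ∑ s ∈ Finset.univ.filter (fun s => ¬ c s = 0), c s
        = (Finset.univ.filter (fun s => ¬ c s = 0)).card * m := by
      rw [Finset.card_eq_sum_ones, Finset.sum_mul]
      refine Finset.sum_congr rfl fun s hs => ?_
      simp only [Finset.mem_filter] at hs
      rcases hfib s with h | h
      · exact absurd h hs.2
      · rw [one_mul, h]
    omega
  have hm' : (m : ℝ) ≠ 0 := Nat.cast_ne_zero.mpr hm
  have hK64 : ((Finset.univ.filter (fun s => ¬ c s = 0)).card : ℝ) * m = 64 := by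
    exact_mod_cast hKm
  have hlog : Real.log ((m : ℝ) / 64) = - Real.log (64 / m) := by
    rw [← Real.log_inv]
    congr 1
    field_simp
  rw [Real.negMulLog, hlog]
  have h1 : ((Finset.univ.filter (fun s => ¬ c s = 0)).card : ℝ) * ((m : ℝ) / 64) = 1 := by
    field_simp
    linarith [hK64]
  calc ((Finset.univ.filter (fun s => ¬ c s = 0)).card : ℝ)
        * (-((m : ℝ) / 64) * - Real.log (64 / m))
      = (((Finset.univ.filter (fun s => ¬ c s = 0)).card : ℝ) * ((m : ℝ) / 64))
        * Real.log (64 / m) := by ring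
    _ = Real.log (64 / m) := by rw [h1, one_mul]

lemma hent_comp' (hIndep : iIndepFun U μ)
    (hUnif : ∀ (j : Fin 6) (s : ZMod 2), μ (U j ⁻¹' {s}) = (2 : ENNReal)⁻¹)
    {S : Type*} [Fintype S] [DecidableEq S] (g : (Fin 6 → ZMod 2) → S) (m : ℕ)
    (hm : m ≠ 0)
    (hfib : ∀ s : S, (Finset.univ.filter (fun u : Fin 6 → ZMod 2 => g u = s)).card = 0 ∨
      (Finset.univ.filter (fun u : Fin 6 → ZMod 2 => g u = s)).card = m)
    (V : Ω → S) (hV : ∀ ω, V ω = g (fun i => U i ω)) :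
    Hent μ V = Real.log (64 / m) := by
  classical
  have hVe : V = fun ω => g (fun i => U i ω) := funext hV
  have hsum : ∑ s : S, (Finset.univ.filter (fun u : Fin 6 → ZMod 2 => g u = s)).card = 64 := by
    have h := Finset.card_eq_sum_card_fiberwise
      (f := g) (s := Finset.univ) (t := Finset.univ) (fun x _ => Finset.mem_univ _)
    rw [Finset.card_univ] at h
    have hcard : Fintype.card (Fin 6 → ZMod 2) = 64 := by
      simp [Fintype.card_fun]
    rw [hcard] at h
    exact h.symm
  rw [hVe]
  unfold Hent
  have hmeas : ∀ s : S, ((μ ((fun ω => g (fun i => U i ω)) ⁻¹' {s})).toReal)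
      = (((Finset.univ.filter (fun u : Fin 6 → ZMod 2 => g u = s)).card : ℝ) / 64) := by
    intro s
    rw [comp_meas μ U hIndep hUnif g s, ENNReal.toReal_mul]
    rw [ENNReal.toReal_inv]
    norm_num
    ring
  rw [Finset.sum_congr rfl (fun s _ => by rw [hmeas s])]
  exact sum_negMulLog_fib _ m hm hfib hsum

end Aux

def mZ : Fin 6 → ℕ := ![16, 16, 16, 8, 8, 16]
def mUZ : Fin 6 → ℕ := ![8, 8, 8, 4, 4, 8]
def mXZ : Fin 6 → ℕ := ![2, 2, 2, 1, 1, 2]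

set_option maxRecDepth 1000000 in
lemma fibZ : ∀ j : Fin 6, ∀ s : (exSideInfo j → ZMod 2),
    (Finset.univ.filter (fun u : Fin 6 → ZMod 2 =>
      (fun i : exSideInfo j => u i) = s)).card = 0 ∨
    (Finset.univ.filter (fun u : Fin 6 → ZMod 2 =>
      (fun i : exSideInfo j => u i) = s)).card = mZ j := by
  decide

set_option maxRecDepth 1000000 in
lemma fibUZ : ∀ j : Fin 6, ∀ s : ZMod 2 × (exSideInfo j → ZMod 2),
    (Finset.univ.filter (fun u : Fin 6 → ZMod 2 =>
      (u j, fun i : exSideInfo j => u i) = s)).card = 0 ∨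
    (Finset.univ.filter (fun u : Fin 6 → ZMod 2 =>
      (u j, fun i : exSideInfo j => u i) = s)).card = mUZ j := by
  decide

set_option maxRecDepth 1000000 in
lemma fibXZ : ∀ j : Fin 6, ∀ s : (ZMod 2 × ZMod 2 × ZMod 2) × (exSideInfo j → ZMod 2),
    (Finset.univ.filter (fun u : Fin 6 → ZMod 2 =>
      ((u 0 + u 2 + u 3, u 1 + u 3 + u 4, u 0 + u 1 + u 5),
        fun i : exSideInfo j => u i) = s)).card = 0 ∨
    (Finset.univ.filter (fun u : Fin 6 → ZMod 2 =>
      ((u 0 + u 2 + u 3, u 1 + u 3 + u 4, u 0 + u 1 + u 5),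
        fun i : exSideInfo j => u i) = s)).card = mXZ j := by
  decide

set_option maxRecDepth 1000000 in
lemma fibUXZ : ∀ j : Fin 6,
    ∀ s : (ZMod 2 × (ZMod 2 × ZMod 2 × ZMod 2)) × (exSideInfo j → ZMod 2),
    (Finset.univ.filter (fun u : Fin 6 → ZMod 2 =>
      ((u j, (u 0 + u 2 + u 3, u 1 + u 3 + u 4, u 0 + u 1 + u 5)),
        fun i : exSideInfo j => u i) = s)).card = 0 ∨
    (Finset.univ.filter (fun u : Fin 6 → ZMod 2 =>
      ((u j, (u 0 + u 2 + u 3, u 1 + u 3 + u 4, u 0 + u 1 + u 5)),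
        fun i : exSideInfo j => u i) = s)).card = mXZ j := by
  decide

lemma fibU4 : ∀ s : ZMod 2,
    (Finset.univ.filter (fun u : Fin 6 → ZMod 2 => u 4 = s)).card = 0 ∨
    (Finset.univ.filter (fun u : Fin 6 → ZMod 2 => u 4 = s)).card = 32 := by
  decide

lemma log_helper (a b : ℝ) (hb : 0 < b) (h : a = 2 * b) :
    Real.log a - Real.log b = Real.log 2 := by
  rw [h, Real.log_mul (by norm_num) (ne_of_gt hb)]
  ring

/-- Mutual information computation in Example 2: for mutually independent
uniform bits `U₁,…,U₆` and `X = (U₁+U₃+U₄, U₂+U₄+U₅, U₁+U₂+U₆)`, every receiver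
`j` has `I[U_j : X | (U_i)_{i ∈ A_j}] = log 2`; in particular
`I[U₅ : X | (U₁,U₄,U₆)] = H[U₅] = log 2`. -/
theorem example2_mutual_information {Ω : Type*} [MeasurableSpace Ω]
    (μ : Measure Ω) [IsProbabilityMeasure μ]
    (U : Fin 6 → Ω → ZMod 2)
    (hIndep : iIndepFun U μ)
    (hUnif : ∀ (j : Fin 6) (s : ZMod 2), μ (U j ⁻¹' {s}) = (2 : ENNReal)⁻¹) :
    (∀ j : Fin 6,
        ImutCond μ (U j)
          (fun ω => (U 0 ω + U 2 ω + U 3 ω, U 1 ω + U 3 ω + U 4 ω,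
            U 0 ω + U 1 ω + U 5 ω))
          (fun ω (i : exSideInfo j) => U i ω) = Real.log 2) ∧
      Hent μ (U 4) = Real.log 2 := by
  constructor
  · intro j
    have hmZ : mZ j ≠ 0 := by fin_cases j <;> decide
    have hmUZ : mUZ j ≠ 0 := by fin_cases j <;> decide
    have hmXZ : mXZ j ≠ 0 := by fin_cases j <;> decide
    have h1 : Hent μ (fun ω => (U j ω, fun i : exSideInfo j => U i ω))
        = Real.log (64 / mUZ j) :=
      hent_comp' μ U hIndep hUnif
        (fun u => (u j, fun i : exSideInfo j => u i)) (mUZ j) hmUZ (fibUZ j)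
        _ (fun ω => rfl)
    have h2 : Hent μ (fun ω => ((U 0 ω + U 2 ω + U 3 ω, U 1 ω + U 3 ω + U 4 ω,
          U 0 ω + U 1 ω + U 5 ω), fun i : exSideInfo j => U i ω))
        = Real.log (64 / mXZ j) :=
      hent_comp' μ U hIndep hUnif
        (fun u => ((u 0 + u 2 + u 3, u 1 + u 3 + u 4, u 0 + u 1 + u 5),
          fun i : exSideInfo j => u i)) (mXZ j) hmXZ (fibXZ j)
        _ (fun ω => rfl)
    have h3 : Hent μ (fun ω => ((U j ω, (U 0 ω + U 2 ω + U 3 ω, U 1 ω + U 3 ω + U 4 ω,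
          U 0 ω + U 1 ω + U 5 ω)), fun i : exSideInfo j => U i ω))
        = Real.log (64 / mXZ j) :=
      hent_comp' μ U hIndep hUnif
        (fun u => ((u j, (u 0 + u 2 + u 3, u 1 + u 3 + u 4, u 0 + u 1 + u 5)),
          fun i : exSideInfo j => u i)) (mXZ j) hmXZ (fibUXZ j)
        _ (fun ω => rfl)
    have h4 : Hent μ (fun ω => fun i : exSideInfo j => U i ω)
        = Real.log (64 / mZ j) :=
      hent_comp' μ U hIndep hUnif
        (fun u => fun i : exSideInfo j => u i) (mZ j) hmZ (fibZ j)
        _ (fun ω => rfl)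
    simp only [ImutCond, HcondEnt]
    rw [h1, h2, h3, h4]
    have e : ∀ x y z : ℝ, x - z + (y - z) - (y - z) = x - z := by intros; ring
    rw [e]
    refine log_helper _ _ ?_ ?_
    · have : (0 : ℝ) < mZ j := by
        have := hmZ; positivity
      positivity
    · fin_cases j <;> norm_num [mUZ, mZ]
  · have h := hent_comp' μ U hIndep hUnif (fun u => u 4) 32 (by norm_num) fibU4
      (U 4) (fun ω => rfl)
    rw [h]
    norm_num
end

section
/- Existence of jointly independent linear composite indices: let I be a finite index set, 𝒫 a finite family of nonempty subsets of I, and s_P (P ∈ 𝒫) and L_i (i ∈ I) natural numbers satisfying L_i ≥ ∑_{P∈𝒫 : i∈P} s_P for every i ∈ I. Then there exist 𝔽₂-linear maps f_P : ∏_{i∈P} 𝔽₂^{L_i} → 𝔽₂^{s_P}, each depending only on the coordinates indexed by P, such that for every subset B ⊆ I and every fixed assignment (u_i)_{i∈B}, the map sending (u_i)_{i∈I∖B} to the tuple (f_P((u_i)_{i∈P}))_{P∈𝒫, P⊄B} is surjective onto ∏_{P∈𝒫, P⊄B} 𝔽₂^{s_P}. -/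
/-- Existence of jointly independent linear composite indices: if
`L i ≥ ∑_{P ∈ Pfam, i ∈ P} s P` for every `i`, then there are `𝔽₂`-linear maps
`f_P : ∏_{i∈P} 𝔽₂^{L i} →ₗ 𝔽₂^{s P}`, each depending only on the coordinates
indexed by `P`, such that for every `B ⊆ I` and every fixed assignment
`(u_i)_{i∈B}`, the map sending `(u_i)_{i∉B}` to `(f_P((u_i)_{i∈P}))_{P∈Pfam, P⊄B}`
is surjective. -/
theorem exists_independent_linear_composite_indices
    {ι : Type*} [Fintype ι] [DecidableEq ι]
    (Pfam : Finset (Finset ι)) (hPfam : ∀ P ∈ Pfam, P.Nonempty)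
    (s : Finset ι → ℕ) (L : ι → ℕ)
    (hL : ∀ i : ι, (∑ P ∈ Pfam.filter (fun P => i ∈ P), s P) ≤ L i) :
    ∃ f : ∀ P : Finset ι,
        ((∀ i : P, (Fin (L i) → ZMod 2)) →ₗ[ZMod 2] (Fin (s P) → ZMod 2)),
      ∀ B : Finset ι, ∀ u : ∀ i : B, (Fin (L i) → ZMod 2),
        Function.Surjective
          (fun (v : ∀ i : {i : ι // i ∉ B}, (Fin (L i) → ZMod 2)) =>
            (fun (P : {P // P ∈ Pfam ∧ ¬ P ⊆ B}) =>
              f P.1 (fun i =>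
                if h : i.1 ∈ B then u ⟨i.1, h⟩ else v ⟨i.1, h⟩))) := by
  classical
  -- For each i, an injection of the disjoint blocks into Fin (L i)
  have key : ∀ i : ι,
      ∃ e : (Σ P : (Pfam.filter (fun P => i ∈ P) : Finset (Finset ι)),
          Fin (s P.1)) → Fin (L i), Function.Injective e := by
    intro i
    have hcard : Fintype.card
        (Σ P : (Pfam.filter (fun P => i ∈ P) : Finset (Finset ι)), Fin (s P.1))
        ≤ Fintype.card (Fin (L i)) := by
      rw [Fintype.card_sigma, Fintype.card_fin]
      simp only [Fintype.card_fin]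
      rw [Finset.sum_coe_sort (Pfam.filter (fun P => i ∈ P)) (fun P => s P)]
      exact hL i
    obtain ⟨e⟩ := Function.Embedding.nonempty_of_card_le hcard
    exact ⟨e, e.injective⟩
  choose e he using key
  -- the linear maps
  refine ⟨fun P =>
    { toFun := fun w k =>
        if hP : P ∈ Pfam then
          ∑ i : P, w i (e i ⟨⟨P, Finset.mem_filter.mpr ⟨hP, i.2⟩⟩, k⟩)
        else 0
      map_add' := by
        intro w w'
        funext k
        by_cases hP : P ∈ Pfam <;> simp [hP, Finset.sum_add_distrib]
      map_smul' := by
        intro c w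
        funext k
        by_cases hP : P ∈ Pfam <;> simp [hP, Finset.mul_sum] }, ?_⟩
  intro B u t
  -- pick a witness in P \ B for each relevant P
  have hpick : ∀ P : {P // P ∈ Pfam ∧ ¬ P ⊆ B}, ∃ x, x ∈ P.1 ∧ x ∉ B := by
    intro P
    exact Finset.not_subset.mp P.2.2
  choose pick hmem hnot using hpick
  -- the "constant" part coming from u
  set c : ∀ P : Finset ι, P ∈ Pfam → Fin (s P) → ZMod 2 := fun P hP k =>
    ∑ i : P, (if h : (i : ι) ∈ B then
      u ⟨i.1, h⟩ (e i ⟨⟨P, Finset.mem_filter.mpr ⟨hP, i.2⟩⟩, k⟩) else 0)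
    with hc
  -- value to write in each block
  set w : ∀ i : ι, (Σ P : (Pfam.filter (fun P => i ∈ P) : Finset (Finset ι)),
      Fin (s P.1)) → ZMod 2 := fun i p =>
    if hB : ¬ p.1.1 ⊆ B then
      (if i = pick ⟨p.1.1, (Finset.mem_filter.mp p.1.2).1, hB⟩ then
        t ⟨p.1.1, (Finset.mem_filter.mp p.1.2).1, hB⟩ p.2
          - c p.1.1 (Finset.mem_filter.mp p.1.2).1 p.2
      else 0)
    else 0 with hw
  refine ⟨fun i => Function.extend (e i.1) (w i.1) 0, ?_⟩
  funext P
  funext k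
  have hP : P.1 ∈ Pfam := P.2.1
  have hPB : ¬ P.1 ⊆ B := P.2.2
  simp only [LinearMap.coe_mk, AddHom.coe_mk, dif_pos hP]
  -- split each summand into u-part and v-part
  have hsummand : ∀ i : P.1,
      (if h : (i : ι) ∈ B then u ⟨i.1, h⟩ else
        Function.extend (e i.1) (w i.1) 0)
        (e i ⟨⟨P.1, Finset.mem_filter.mpr ⟨hP, i.2⟩⟩, k⟩)
      = (if h : (i : ι) ∈ B then
          u ⟨i.1, h⟩ (e i ⟨⟨P.1, Finset.mem_filter.mpr ⟨hP, i.2⟩⟩, k⟩) else 0)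
        + (if (i : ι) = pick P then t P k - c P.1 hP k else 0) := by
    intro i
    by_cases h : (i : ι) ∈ B
    · rw [dif_pos h, dif_pos h]
      have hne : ¬ (i : ι) = pick P := by
        intro hi
        exact hnot P (hi ▸ h)
      rw [if_neg hne, add_zero]
    · rw [dif_neg h, dif_neg h, zero_add]
      rw [(he i.1).extend_apply]
      show w i.1 ⟨⟨P.1, Finset.mem_filter.mpr ⟨hP, i.2⟩⟩, k⟩ = _
      rw [hw]
      simp only [dif_pos hPB]
  have hs : ∑ i : P.1,
      (if h : (i : ι) ∈ B then u ⟨i.1, h⟩ else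
        Function.extend (e i.1) (w i.1) 0)
        (e i ⟨⟨P.1, Finset.mem_filter.mpr ⟨hP, i.2⟩⟩, k⟩)
      = c P.1 hP k
        + ∑ i : P.1, (if (i : ι) = pick P then t P k - c P.1 hP k else 0) := by
    rw [Finset.sum_congr rfl (fun i _ => hsummand i), Finset.sum_add_distrib]
  rw [hs]
  have hd : ∑ i : P.1, (if (i : ι) = pick P then t P k - c P.1 hP k else 0)
      = t P k - c P.1 hP k := by
    have heq : ∀ i : P.1, ((i : ι) = pick P) ↔ (i = (⟨pick P, hmem P⟩ : P.1)) :=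
      fun i => ⟨fun h => Subtype.ext h, fun h => congrArg Subtype.val h⟩
    simp only [heq]
    exact Fintype.sum_ite_eq' (⟨pick P, hmem P⟩ : P.1) (fun _ => t P k - c P.1 hP k)
  rw [hd]
  ring
end
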